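/- Let F_q be a finite field with q elements and let A ∈ F_q[T] be monic irreducible of degree a. Then for s ∈ ℂ with Re(s) > 1, ∑_{X monic, A ∣ X} |X|^{−2s} · φ(AX)/φ(A) = ( q^{a(1−2s)} / (1 − q^{−2as}) ) · (1 − q^{1−2s}) / (1 − q^{2−2s}); equivalently, the sum equals ( q^{a(1−2s)}/(1 − q^{−2as}) ) · ζ_{F_q[T]}(2s−1)/ζ_{F_q[T]}(2s). -/

import Mathlib

/- STATEMENT 8:
Let F_q be a finite field with q elements and A ∈ F_q[T] monic irreducible of degree a.
Then for s ∈ ℂ with Re(s) > 1,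
  ∑_{X monic, A ∣ X} |X|^{−2s}·φ(AX)/φ(A)
    = ( q^{a(1−2s)}/(1 − q^{−2as}) ) · (1 − q^{1−2s})/(1 − q^{2−2s}),
where |X| = q^{deg X}, q^w := exp(w log q) and φ is the polynomial Euler totient;
equivalently the sum equals (q^{a(1−2s)}/(1−q^{−2as}))·ζ_{F_q[T]}(2s−1)/ζ_{F_q[T]}(2s). -/

open Polynomial

/-- The polynomial Euler totient `φ(X) = #(F_q[T]/(X))^×`. -/
noncomputable def polyPhi {Fq : Type} [Field Fq] [Fintype Fq] (X : Polynomial Fq) : ℕ :=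
  Nat.card ((Polynomial Fq ⧸ Ideal.span {X})ˣ)


set_option linter.unusedSectionVars false
set_option maxHeartbeats 1600000

noncomputable section PhiAux

variable {Fq : Type} [Field Fq] [Fintype Fq]

/-- Representatives of the quotient by a monic polynomial. -/
def repEquiv (N : Polynomial Fq) (hN : N.Monic) :
    {b : Polynomial Fq // b ∈ degreeLT Fq N.natDegree} ≃ (Polynomial Fq ⧸ Ideal.span {N}) := by
  refine Equiv.ofBijective (fun b => Ideal.Quotient.mk _ b.1) ⟨?_, ?_⟩
  · rintro ⟨b₁, h₁⟩ ⟨b₂, h₂⟩ h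
    simp only [Ideal.Quotient.mk_eq_mk, Subtype.mk.injEq] at h ⊢
    rw [Ideal.Quotient.eq, Ideal.mem_span_singleton] at h
    have hd : (b₁ - b₂).degree < N.degree := by
      rw [degree_eq_natDegree hN.ne_zero]
      exact lt_of_le_of_lt (degree_sub_le _ _)
        (max_lt (mem_degreeLT.mp h₁) (mem_degreeLT.mp h₂))
    have := eq_zero_of_dvd_of_degree_lt h hd
    exact sub_eq_zero.mp this
  · intro x
    obtain ⟨b, rfl⟩ := Ideal.Quotient.mk_surjective x
    refine ⟨⟨b %ₘ N, ?_⟩, ?_⟩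
    · rw [mem_degreeLT, ← degree_eq_natDegree hN.ne_zero]
      exact degree_modByMonic_lt b hN
    · simp only [Ideal.Quotient.mk_eq_mk]
      rw [Ideal.Quotient.eq, Ideal.mem_span_singleton]
      have h := modByMonic_add_div b N
      exact ⟨-(b /ₘ N), by linear_combination h⟩

theorem isUnit_mk_iff (N : Polynomial Fq) (b : Polynomial Fq) :
    IsUnit (Ideal.Quotient.mk (Ideal.span {N}) b) ↔ IsCoprime b N := by
  constructor
  · rintro ⟨u, hu⟩
    obtain ⟨c, hc⟩ := Ideal.Quotient.mk_surjective (↑u⁻¹ : Polynomial Fq ⧸ Ideal.span {N})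
    have h1 : Ideal.Quotient.mk (Ideal.span {N}) (b * c) = 1 := by
      rw [map_mul, hc, ← hu]; exact u.mul_inv
    rw [← map_one (Ideal.Quotient.mk (Ideal.span {N})), Ideal.Quotient.eq,
      Ideal.mem_span_singleton] at h1
    obtain ⟨d, hd⟩ := h1
    exact ⟨c, -d, by linear_combination hd⟩
  · rintro ⟨x, y, hxy⟩
    refine IsUnit.of_mul_eq_one (a := Ideal.Quotient.mk (Ideal.span {N}) b) (Ideal.Quotient.mk _ x) ?_
    rw [← map_mul, ← map_one (Ideal.Quotient.mk (Ideal.span {N})), Ideal.Quotient.eq,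
      Ideal.mem_span_singleton]
    exact ⟨-y, by linear_combination hxy⟩

theorem card_units_eq (M : Type*) [CommMonoid M] :
    Nat.card Mˣ = Nat.card {x : M // IsUnit x} := by
  refine Nat.card_congr (Equiv.ofBijective (fun u => ⟨u.1, u.isUnit⟩) ⟨?_, ?_⟩)
  · intro a b h
    exact Units.ext (congrArg Subtype.val h)
  · rintro ⟨x, hx⟩
    exact ⟨hx.unit, by simp⟩

/-- `polyPhi` as a count of coprime representatives. -/
theorem polyPhi_eq_card {Fq : Type} [Field Fq] [Fintype Fq] (N : Polynomial Fq) (hN : N.Monic) :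
    Nat.card ((Polynomial Fq ⧸ Ideal.span {N})ˣ) =
      Nat.card {b : Polynomial Fq // b ∈ degreeLT Fq N.natDegree ∧ IsCoprime b N} := by
  rw [card_units_eq]
  refine Nat.card_congr (Equiv.symm ?_)
  refine ((Equiv.subtypeSubtypeEquivSubtypeInter _ _).symm.trans ?_)
  exact (repEquiv N hN).subtypeEquiv (fun b => by
    exact (isUnit_mk_iff N b.1).symm)

instance degLTFinite (n : ℕ) : Finite {b : Polynomial Fq // b ∈ degreeLT Fq n} :=
  Finite.of_equiv _ (degreeLTEquiv Fq n).toEquiv.symm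

theorem card_degreeLT (n : ℕ) :
    Nat.card {b : Polynomial Fq // b ∈ degreeLT Fq n} = Fintype.card Fq ^ n := by
  rw [Nat.card_congr (degreeLTEquiv Fq n).toEquiv]
  simp [Nat.card_eq_fintype_card]

instance moFinite (n : ℕ) : Finite {p : Polynomial Fq // p.Monic ∧ p.natDegree = n} :=
  Finite.of_equiv _ (monicEquivDegreeLT n).symm

theorem card_monic (n : ℕ) :
    Nat.card {p : Polynomial Fq // p.Monic ∧ p.natDegree = n} = Fintype.card Fq ^ n := by
  rw [Nat.card_congr (monicEquivDegreeLT n)]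
  exact card_degreeLT n


/-- Division with remainder as an equivalence on coprime representatives. -/
def divModEquiv (X : Polynomial Fq) (hX : X.Monic) (a : ℕ) :
    {b : Polynomial Fq // b ∈ degreeLT Fq (a + X.natDegree) ∧ IsCoprime b X} ≃
      ({c : Polynomial Fq // c ∈ degreeLT Fq a} ×
        {r : Polynomial Fq // r ∈ degreeLT Fq X.natDegree ∧ IsCoprime r X}) where
  toFun b := ⟨⟨b.1 /ₘ X, by
      by_cases h : b.1.degree < X.degree
      · rw [divByMonic_eq_zero_iff hX |>.mpr h]; exact Submodule.zero_mem _
      · push_neg at h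
        have hb0 : b.1 ≠ 0 := by
          intro h0
          rw [h0, degree_zero] at h
          simp only [le_bot_iff, degree_eq_bot] at h
          exact hX.ne_zero h
        have hq0 : b.1 /ₘ X ≠ 0 := by
          rw [Ne, divByMonic_eq_zero_iff hX]; exact not_lt.mpr h
        rw [mem_degreeLT, ← natDegree_lt_iff_degree_lt hq0, natDegree_divByMonic _ hX]
        have hdb : b.1.natDegree < a + X.natDegree := by
          rw [natDegree_lt_iff_degree_lt hb0]; exact_mod_cast (mem_degreeLT.mp b.2.1)
        have hge : X.natDegree ≤ b.1.natDegree := natDegree_le_natDegree h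
        omega⟩,
    ⟨b.1 %ₘ X, by
      rw [mem_degreeLT, ← degree_eq_natDegree hX.ne_zero]
      exact degree_modByMonic_lt _ hX, by
      have h := b.2.2.add_mul_left_left (-(b.1 /ₘ X))
      have hmod : b.1 %ₘ X = b.1 + X * -(b.1 /ₘ X) := by
        linear_combination modByMonic_add_div b.1 X
      rwa [hmod]⟩⟩
  invFun p := ⟨X * p.1.1 + p.2.1, by
    constructor
    · rw [mem_degreeLT]
      refine lt_of_le_of_lt (degree_add_le _ _) (max_lt ?_ ?_)
      · rw [degree_mul]
        calc X.degree + p.1.1.degree < X.degree + a := by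
              refine WithBot.add_lt_add_left (by simp [hX.ne_zero]) ?_
              exact mem_degreeLT.mp p.1.2
          _ = ((X.natDegree + a : ℕ) : WithBot ℕ) := by
              rw [degree_eq_natDegree hX.ne_zero]; push_cast; ring
          _ = ((a + X.natDegree : ℕ) : WithBot ℕ) := by rw [Nat.add_comm]
      · refine lt_of_lt_of_le (mem_degreeLT.mp p.2.2.1) ?_
        exact_mod_cast Nat.cast_le.mpr (Nat.le_add_left _ _)
    · have h := p.2.2.2.add_mul_left_left p.1.1
      rwa [add_comm] at h⟩
  left_inv b := Subtype.ext (by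
    simp only
    linear_combination (modByMonic_add_div b.1 X))
  right_inv p := by
    have key := div_modByMonic_unique (f := X * p.1.1 + p.2.1) (g := X) p.1.1 p.2.1 hX
      ⟨by ring, by rw [degree_eq_natDegree hX.ne_zero]; exact mem_degreeLT.mp p.2.2.1⟩
    refine Prod.ext (Subtype.ext ?_) (Subtype.ext ?_)
    · exact key.1
    · exact key.2

instance copFinite (N : Polynomial Fq) (n : ℕ) :
    Finite {b : Polynomial Fq // b ∈ degreeLT Fq n ∧ IsCoprime b N} :=
  Finite.of_injective (fun b => (⟨b.1, b.2.1⟩ : {b : Polynomial Fq // b ∈ degreeLT Fq n}))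
    (by intro x y h; exact Subtype.ext (by simpa using congrArg Subtype.val h))

/-- Key multiplicativity: `φ(A*X) = q^(deg A) * φ(X)` when `A ∣ X`. -/
theorem phi_mul_of_dvd (A X : Polynomial Fq) (hA : A.Monic) (hX : X.Monic) (h : A ∣ X) :
    Nat.card ((Polynomial Fq ⧸ Ideal.span {A * X})ˣ) =
      Fintype.card Fq ^ A.natDegree * Nat.card ((Polynomial Fq ⧸ Ideal.span {X})ˣ) := by
  rw [polyPhi_eq_card _ (hA.mul hX), polyPhi_eq_card _ hX]
  have hco : ∀ b : Polynomial Fq, IsCoprime b (A * X) ↔ IsCoprime b X := by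
    intro b
    constructor
    · exact fun hb => hb.of_isCoprime_of_dvd_right (dvd_mul_left X A)
    · intro hb
      exact IsCoprime.mul_right (hb.of_isCoprime_of_dvd_right h) hb
  have hdeg : (A * X).natDegree = A.natDegree + X.natDegree := hA.natDegree_mul hX
  have e1 : {b : Polynomial Fq // b ∈ degreeLT Fq (A * X).natDegree ∧ IsCoprime b (A * X)} ≃
      {b : Polynomial Fq // b ∈ degreeLT Fq (A.natDegree + X.natDegree) ∧ IsCoprime b X} :=
    Equiv.subtypeEquivRight (fun b => by rw [hdeg, hco b])
  rw [Nat.card_congr (e1.trans (divModEquiv X hX A.natDegree)), Nat.card_prod, card_degreeLT]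

theorem phi_mul_coprime (P Q : Polynomial Fq) (h : IsCoprime P Q) :
    Nat.card ((Polynomial Fq ⧸ Ideal.span {P * Q})ˣ) =
      Nat.card ((Polynomial Fq ⧸ Ideal.span {P})ˣ) *
        Nat.card ((Polynomial Fq ⧸ Ideal.span {Q})ˣ) := by
  have h1 : Ideal.span {P * Q} = Ideal.span {P} * Ideal.span ({Q} : Set (Polynomial Fq)) :=
    (Ideal.span_singleton_mul_span_singleton P Q).symm
  have e1 : (Polynomial Fq ⧸ Ideal.span {P * Q}) ≃+*
      ((Polynomial Fq ⧸ Ideal.span {P}) × (Polynomial Fq ⧸ Ideal.span {Q})) :=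
    (Ideal.quotEquivOfEq h1).trans
      (Ideal.quotientMulEquivQuotientProd _ _ ((Ideal.isCoprime_span_singleton_iff P Q).mpr h))
  rw [Nat.card_congr (Units.mapEquiv e1.toMulEquiv).toEquiv,
    Nat.card_congr MulEquiv.prodUnits.toEquiv, Nat.card_prod]

theorem card_quotient_monic (N : Polynomial Fq) (hN : N.Monic) :
    Nat.card (Polynomial Fq ⧸ Ideal.span {N}) = Fintype.card Fq ^ N.natDegree := by
  rw [Nat.card_congr (repEquiv N hN).symm]
  exact card_degreeLT N.natDegree

/-- For `A` monic irreducible, `φ(A) + 1 = q ^ deg A`. -/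
theorem phi_irreducible (A : Polynomial Fq) (hA : A.Monic) (hAirr : Irreducible A) :
    Nat.card ((Polynomial Fq ⧸ Ideal.span {A})ˣ) + 1 = Fintype.card Fq ^ A.natDegree := by
  haveI hmax : (Ideal.span {A}).IsMaximal := PrincipalIdealRing.isMaximal_of_irreducible hAirr
  letI : Field (Polynomial Fq ⧸ Ideal.span {A}) := Ideal.Quotient.field _
  have hcard := card_quotient_monic A hA
  have hfin : Finite (Polynomial Fq ⧸ Ideal.span {A}) := by
    refine Nat.finite_of_card_ne_zero ?_
    rw [hcard]
    positivity
  cases nonempty_fintype (Polynomial Fq ⧸ Ideal.span {A})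
  classical
  rw [Nat.card_eq_fintype_card, Fintype.card_units, ← Nat.card_eq_fintype_card, hcard]
  have h2 : 2 ≤ Fintype.card Fq ^ A.natDegree := by
    have : 2 ≤ Fintype.card Fq := Fintype.one_lt_card
    calc 2 ≤ Fintype.card Fq := this
      _ = Fintype.card Fq ^ 1 := (pow_one _).symm
      _ ≤ Fintype.card Fq ^ A.natDegree := by
          apply Nat.pow_le_pow_right (by omega)
          exact hAirr.natDegree_pos
  omega

/-- All pairs `(M, r)` with `M` monic of degree `n` and `deg r < n`. -/
abbrev AP (Fq : Type) [Field Fq] (n : ℕ) :=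
  {p : Polynomial Fq × Polynomial Fq // p.1.Monic ∧ p.1.natDegree = n ∧ p.2 ∈ degreeLT Fq n}

/-- Coprime pairs `(M, r)` with `M` monic of degree `n` and `deg r < n`. -/
abbrev CP (Fq : Type) [Field Fq] (n : ℕ) :=
  {p : Polynomial Fq × Polynomial Fq //
    p.1.Monic ∧ p.1.natDegree = n ∧ p.2 ∈ degreeLT Fq n ∧ IsCoprime p.2 p.1}

def apEquiv (n : ℕ) : AP Fq n ≃
    ({p : Polynomial Fq // p.Monic ∧ p.natDegree = n} ×
      {b : Polynomial Fq // b ∈ degreeLT Fq n}) where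
  toFun p := (⟨p.1.1, p.2.1, p.2.2.1⟩, ⟨p.1.2, p.2.2.2⟩)
  invFun x := ⟨(x.1.1, x.2.1), x.1.2.1, x.1.2.2, x.2.2⟩
  left_inv p := rfl
  right_inv x := rfl

instance apFinite (n : ℕ) : Finite (AP Fq n) := Finite.of_equiv _ (apEquiv n).symm

instance cpFinite (n : ℕ) : Finite (CP Fq n) :=
  Finite.of_injective (fun p => (⟨p.1, p.2.1, p.2.2.1, p.2.2.2.1⟩ : AP Fq n))
    (by intro x y h; exact Subtype.ext (by simpa [AP] using congrArg Subtype.val h))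

theorem card_AP (n : ℕ) :
    Nat.card (AP Fq n) = Fintype.card Fq ^ n * Fintype.card Fq ^ n := by
  rw [Nat.card_congr (apEquiv n), Nat.card_prod, card_monic, card_degreeLT]

/-- The gcd-decomposition bijection. -/
theorem gcd_decomp (n : ℕ) :
    Function.Bijective (fun x : Σ d : Fin (n+1),
        ({p : Polynomial Fq // p.Monic ∧ p.natDegree = d.1} × CP Fq (n - d.1)) =>
      (⟨(x.2.1.1 * x.2.2.1.1, x.2.1.1 * x.2.2.1.2), x.2.1.2.1.mul x.2.2.2.1, by
          rw [x.2.1.2.1.natDegree_mul x.2.2.2.1, x.2.1.2.2, x.2.2.2.2.1]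
          have := x.1.2
          omega, by
          rw [mem_degreeLT, degree_mul]
          have h1 : x.2.1.1.degree = (x.1.1 : WithBot ℕ) := by
            rw [degree_eq_natDegree x.2.1.2.1.ne_zero, x.2.1.2.2]
          have h2 : x.2.2.1.2.degree < ((n - x.1.1 : ℕ) : WithBot ℕ) :=
            mem_degreeLT.mp x.2.2.2.2.2.1
          calc x.2.1.1.degree + x.2.2.1.2.degree
              < x.2.1.1.degree + ((n - x.1.1 : ℕ) : WithBot ℕ) := by
                refine WithBot.add_lt_add_left (by rw [h1]; exact WithBot.coe_ne_bot) h2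
            _ = ((x.1.1 + (n - x.1.1) : ℕ) : WithBot ℕ) := by rw [h1]; push_cast; ring
            _ = (n : WithBot ℕ) := by
                have := x.1.2; congr 1; omega⟩ : AP Fq n)) := by
  constructor
  · rintro ⟨d1, G1, p1⟩ ⟨d2, G2, p2⟩ h
    have hval := congrArg Subtype.val h
    simp only [AP] at hval
    have h1 : G1.1 * p1.1.1 = G2.1 * p2.1.1 := congrArg Prod.fst hval
    have h2 : G1.1 * p1.1.2 = G2.1 * p2.1.2 := congrArg Prod.snd hval
    obtain ⟨u1, v1, huv1⟩ := p1.2.2.2.2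
    obtain ⟨u2, v2, huv2⟩ := p2.2.2.2.2
    have d21 : G2.1 ∣ G1.1 :=
      ⟨u1 * p2.1.2 + v1 * p2.1.1, by linear_combination (-G1.1) * huv1 + u1 * h2 + v1 * h1⟩
    have d12 : G1.1 ∣ G2.1 :=
      ⟨u2 * p1.1.2 + v2 * p1.1.1, by linear_combination (-G2.1) * huv2 - u2 * h2 - v2 * h1⟩
    have hG : G1.1 = G2.1 :=
      eq_of_monic_of_associated G1.2.1 G2.2.1 (associated_of_dvd_dvd d12 d21)
    obtain rfl : d1 = d2 := Fin.ext (by rw [← G1.2.2, ← G2.2.2, hG])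
    have hM : p1.1.1 = p2.1.1 :=
      mul_left_cancel₀ G1.2.1.ne_zero (by rw [h1, hG])
    have hr : p1.1.2 = p2.1.2 :=
      mul_left_cancel₀ G1.2.1.ne_zero (by rw [h2, hG])
    exact congrArg (Sigma.mk d1)
      (Prod.ext (Subtype.ext hG) (Subtype.ext (Prod.ext hM hr)))
  · rintro ⟨⟨M, r⟩, hM, hMd, hr⟩
    classical
    letI : GCDMonoid (Polynomial Fq) := EuclideanDomain.gcdMonoid _
    by_cases hr0 : r = 0
    · refine ⟨⟨⟨n, Nat.lt_succ_self n⟩, ⟨M, hM, hMd⟩,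
        ⟨(1, 0), monic_one, by simp, Submodule.zero_mem _,
          isCoprime_zero_left.mpr isUnit_one⟩⟩, ?_⟩
      exact Subtype.ext (Prod.ext (mul_one M) (by simp [hr0]))
    · have hM0 : M ≠ 0 := hM.ne_zero
      set g0 := GCDMonoid.gcd M r with hg0def
      have hg0 : g0 ≠ 0 := gcd_ne_zero_of_left hM0
      set u := g0.leadingCoeff with hudef
      have hu : u ≠ 0 := leadingCoeff_ne_zero.mpr hg0
      set G := g0 * C u⁻¹ with hGdef
      have hGmonic : G.Monic := monic_mul_leadingCoeff_inv hg0
      have hCC : C u⁻¹ * C u = (1 : Polynomial Fq) := by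
        rw [← C_mul, inv_mul_cancel₀ hu, C_1]
      set M1 := C u * (M / g0) with hM1def
      set r1 := C u * (r / g0) with hr1def
      have hMG : G * M1 = M := by
        calc g0 * C u⁻¹ * (C u * (M / g0)) = C u⁻¹ * C u * (g0 * (M / g0)) := by ring
          _ = 1 * M := by
              rw [hCC, EuclideanDomain.mul_div_cancel' hg0 (gcd_dvd_left M r)]
          _ = M := one_mul M
      have hrG : G * r1 = r := by
        calc g0 * C u⁻¹ * (C u * (r / g0)) = C u⁻¹ * C u * (g0 * (r / g0)) := by ring
          _ = 1 * r := by
              rw [hCC, EuclideanDomain.mul_div_cancel' hg0 (gcd_dvd_right M r)]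
          _ = r := one_mul r
      have hM1 : M1.Monic := hGmonic.of_mul_monic_left (by rw [hMG]; exact hM)
      have hGdvdM : G ∣ M := ⟨M1, hMG.symm⟩
      have hdn : G.natDegree ≤ n := hMd ▸ natDegree_le_of_dvd hGdvdM hM0
      have hM1d : M1.natDegree = n - G.natDegree := by
        have := hGmonic.natDegree_mul hM1
        rw [hMG, hMd] at this
        omega
      have hcop : IsCoprime r1 M1 := by
        have h := isCoprime_div_gcd_div_gcd (p := M) (q := r) hr0
        obtain ⟨x, y, hxy⟩ := h.symm
        exact ⟨C u⁻¹ * x, C u⁻¹ * y, by linear_combination (C u⁻¹ * C u) * hxy + hCC⟩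
      have hr1mem : r1 ∈ degreeLT Fq (n - G.natDegree) := by
        by_cases hr1 : r1 = 0
        · rw [hr1]; exact Submodule.zero_mem _
        · have hrne : r ≠ 0 := hr0
          have hG0 : G ≠ 0 := hGmonic.ne_zero
          have hnat : r.natDegree = G.natDegree + r1.natDegree := by
            rw [← hrG]; exact natDegree_mul hG0 hr1
          have hrn : r.natDegree < n := by
            rw [natDegree_lt_iff_degree_lt hrne]; exact mem_degreeLT.mp hr
          rw [mem_degreeLT, ← natDegree_lt_iff_degree_lt hr1]
          omega
      refine ⟨⟨⟨G.natDegree, by omega⟩, ⟨G, hGmonic, rfl⟩,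
        ⟨(M1, r1), hM1, hM1d, hr1mem, hcop⟩⟩, ?_⟩
      exact Subtype.ext (Prod.ext hMG hrG)

theorem rec_identity (n : ℕ) :
    Fintype.card Fq ^ n * Fintype.card Fq ^ n =
      ∑ k ∈ Finset.range (n + 1), Fintype.card Fq ^ (n - k) * Nat.card (CP Fq k) := by
  classical
  haveI : ∀ k, Fintype (CP Fq k) := fun k => Fintype.ofFinite _
  haveI : ∀ k, Fintype {p : Polynomial Fq // p.Monic ∧ p.natDegree = k} :=
    fun k => Fintype.ofFinite _
  have h := Nat.card_congr (Equiv.ofBijective _ (gcd_decomp (Fq := Fq) n))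
  rw [card_AP] at h
  rw [← h, Nat.card_eq_fintype_card]
  rw [Fintype.card_sigma]
  have : ∀ d : Fin (n+1), Fintype.card
      ({p : Polynomial Fq // p.Monic ∧ p.natDegree = d.1} × CP Fq (n - d.1)) =
      Fintype.card Fq ^ d.1 * Nat.card (CP Fq (n - d.1)) := by
    intro d
    rw [Fintype.card_prod, ← Nat.card_eq_fintype_card, ← Nat.card_eq_fintype_card, card_monic]
  rw [Finset.sum_congr rfl (fun d _ => this d)]
  rw [Fin.sum_univ_eq_sum_range (fun i => Fintype.card Fq ^ i * Nat.card (CP Fq (n - i)))]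
  rw [← Finset.sum_range_reflect]
  refine Finset.sum_congr rfl (fun k hk => ?_)
  simp only [Finset.mem_range] at hk
  have h1 : n + 1 - 1 - k = n - k := by omega
  have h2 : n - (n - k) = k := by omega
  rw [h1, h2]

theorem cp_zero : Nat.card (CP Fq 0) = 1 := by
  have e : CP Fq 0 ≃ Unit := {
    toFun := fun _ => ()
    invFun := fun _ => ⟨(1, 0), monic_one, natDegree_one, Submodule.zero_mem _,
      isCoprime_zero_left.mpr isUnit_one⟩
    left_inv := by
      rintro ⟨⟨M, r⟩, hM, hMd, hr, hc⟩
      have hM1 : M = 1 := (Monic.natDegree_eq_zero hM).mp hMd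
      have hr1 : r = 0 := by
        have h := mem_degreeLT.mp hr
        rw [Nat.cast_zero, Nat.WithBot.lt_zero_iff, degree_eq_bot] at h
        exact h
      exact Subtype.ext (Prod.ext hM1.symm hr1.symm)
    right_inv := fun _ => rfl }
  rw [Nat.card_congr e]
  simp

theorem cp_succ (n : ℕ) :
    Nat.card (CP Fq (n + 1)) + Fintype.card Fq ^ (2 * n + 1) =
      Fintype.card Fq ^ (2 * n + 2) := by
  have h1 := rec_identity (Fq := Fq) (n + 1)
  rw [Finset.sum_range_succ] at h1
  have hstep : ∑ k ∈ Finset.range (n + 1),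
      Fintype.card Fq ^ (n + 1 - k) * Nat.card (CP Fq k) =
      Fintype.card Fq * (Fintype.card Fq ^ n * Fintype.card Fq ^ n) := by
    rw [rec_identity n, Finset.mul_sum]
    refine Finset.sum_congr rfl (fun k hk => ?_)
    simp only [Finset.mem_range] at hk
    rw [show n + 1 - k = (n - k) + 1 from by omega, pow_succ]
    ring
  rw [hstep] at h1
  have e1 : Fintype.card Fq ^ (n+1) * Fintype.card Fq ^ (n+1) = Fintype.card Fq ^ (2*n+2) := by
    rw [← pow_add]; congr 1; omega
  have e2 : Fintype.card Fq * (Fintype.card Fq ^ n * Fintype.card Fq ^ n) =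
      Fintype.card Fq ^ (2*n+1) := by
    rw [← pow_add, ← pow_succ']; congr 1; omega
  rw [e1, e2] at h1
  rw [show n + 1 - (n + 1) = 0 from by omega, pow_zero, one_mul] at h1
  omega

theorem cp_le (n : ℕ) : Nat.card (CP Fq n) ≤ Fintype.card Fq ^ (2 * n) := by
  cases n with
  | zero => rw [cp_zero]; simp
  | succ n =>
    have h := cp_succ (Fq := Fq) n
    rw [show 2 * (n + 1) = 2 * n + 2 from by omega]
    omega

theorem sum_phi (n : ℕ) [Fintype {p : Polynomial Fq // p.Monic ∧ p.natDegree = n}] :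
    ∑ M : {p : Polynomial Fq // p.Monic ∧ p.natDegree = n},
      Nat.card ((Polynomial Fq ⧸ Ideal.span {M.1})ˣ) = Nat.card (CP Fq n) := by
  classical
  have e : CP Fq n ≃ Σ M : {p : Polynomial Fq // p.Monic ∧ p.natDegree = n},
      {b : Polynomial Fq // b ∈ degreeLT Fq n ∧ IsCoprime b M.1} := {
    toFun := fun p => ⟨⟨p.1.1, p.2.1, p.2.2.1⟩, ⟨p.1.2, p.2.2.2⟩⟩
    invFun := fun x => ⟨(x.1.1, x.2.1), x.1.2.1, x.1.2.2, x.2.2.1, x.2.2.2⟩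
    left_inv := fun _ => rfl
    right_inv := fun _ => rfl }
  haveI : ∀ M : {p : Polynomial Fq // p.Monic ∧ p.natDegree = n},
      Fintype {b : Polynomial Fq // b ∈ degreeLT Fq n ∧ IsCoprime b M.1} :=
    fun M => Fintype.ofFinite _
  rw [Nat.card_congr e, Nat.card_eq_fintype_card, Fintype.card_sigma]
  refine Finset.sum_congr rfl (fun M _ => ?_)
  rw [polyPhi_eq_card M.1 M.2.1, M.2.2, Nat.card_eq_fintype_card]

theorem tsum_aux (A : Polynomial Fq)
    (f : {X : Polynomial Fq // X.Monic ∧ A ∣ X} → ℂ) :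
    ∑' x : {M : {p : Polynomial Fq // p.Monic} // A ∣ M.1},
      f ⟨x.1.1, x.1.2, x.2⟩ = ∑' X, f X :=
  Equiv.tsum_eq (⟨fun x => ⟨x.1.1, x.1.2, x.2⟩, fun X => ⟨⟨X.1, X.2.1⟩, X.2.2⟩,
    fun _ => rfl, fun _ => rfl⟩ :
    {M : {p : Polynomial Fq // p.Monic} // A ∣ M.1} ≃ {X : Polynomial Fq // X.Monic ∧ A ∣ X}) f

theorem main_thm (A : Polynomial Fq) (hA : A.Monic) (hAirr : Irreducible A)
    (s : ℂ) (hs : 1 < s.re) :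
    HasSum (fun X : {X : Polynomial Fq // X.Monic ∧ A ∣ X} =>
        (Fintype.card Fq : ℂ) ^ (-(2 * s) * (X.1.natDegree : ℂ)) *
          (polyPhi (A * X.1) : ℂ) / (polyPhi A : ℂ))
      (((Fintype.card Fq : ℂ) ^ ((A.natDegree : ℂ) * (1 - 2 * s)) /
          (1 - (Fintype.card Fq : ℂ) ^ (-(2 * (A.natDegree : ℂ) * s)))) *
        ((1 - (Fintype.card Fq : ℂ) ^ (1 - 2 * s)) /
          (1 - (Fintype.card Fq : ℂ) ^ (2 - 2 * s)))) := by
  classical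
  set Q : ℂ := (Fintype.card Fq : ℂ) with hQdef
  set rq : ℝ := (Fintype.card Fq : ℝ) with hrqdef
  have hq1 : (1 : ℝ) < rq := by rw [hrqdef]; exact_mod_cast (Fintype.one_lt_card : 1 < Fintype.card Fq)
  have hq0 : (0 : ℝ) < rq := by linarith
  have hQr : Q = ((rq : ℝ) : ℂ) := by rw [hQdef, hrqdef]; push_cast; rfl
  have hQ0 : Q ≠ 0 := by
    rw [hQr]
    exact_mod_cast ne_of_gt (by exact_mod_cast hq0 : (0:ℝ) < rq)
  set u : ℂ := Q ^ (-(2 * s)) with hudef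
  set v : ℂ := Q ^ (2:ℕ) * u with hvdef
  have hre : (-(2 * s)).re = -(2 * s.re) := by simp
  have hnormu : ‖u‖ = rq ^ (-(2 * s.re)) := by
    rw [hudef, hQr, Complex.norm_cpow_eq_rpow_re_of_pos hq0, hre]
  have hult : ‖u‖ < 1 := by
    rw [hnormu]
    exact Real.rpow_lt_one_of_one_lt_of_neg hq1 (by linarith)
  have hnormv : ‖v‖ = rq ^ (2 - 2 * s.re) := by
    rw [hvdef, norm_mul, norm_pow, hQr, Complex.norm_real, Real.norm_of_nonneg hq0.le,
      hnormu, ← Real.rpow_natCast rq 2, ← Real.rpow_add hq0]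
    norm_num
    ring_nf
  have hvlt : ‖v‖ < 1 := by
    rw [hnormv]
    exact Real.rpow_lt_one_of_one_lt_of_neg hq1 (by linarith)
  have hv1 : (1 : ℂ) - v ≠ 0 := by
    intro h
    have : v = 1 := by linear_combination -h
    rw [this] at hvlt; simp at hvlt
  -- the full series over monic polynomials
  set Mon := {p : Polynomial Fq // p.Monic} with hMon
  set g : Mon → ℂ := fun M =>
    u ^ M.1.natDegree * (Nat.card ((Polynomial Fq ⧸ Ideal.span {M.1})ˣ) : ℂ) with hgdef
  set Mo : ℕ → Type := fun n => {p : Polynomial Fq // p.Monic ∧ p.natDegree = n} with hMo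
  haveI : ∀ n, Fintype (Mo n) := fun n => Fintype.ofFinite _
  set σE : Mon ≃ Σ n : ℕ, Mo n := {
    toFun := fun M => ⟨M.1.natDegree, ⟨M.1, M.2, rfl⟩⟩
    invFun := fun x => ⟨x.2.1, x.2.2.1⟩
    left_inv := fun _ => rfl
    right_inv := by rintro ⟨n, ⟨M, hM, rfl⟩⟩; rfl } with hσE
  set gs : (Σ n : ℕ, Mo n) → ℂ := fun x => g ⟨x.2.1, x.2.2.1⟩ with hgs
  -- summability of norms
  have hfibsum : ∀ n : ℕ, ∑ M : Mo n, (Nat.card ((Polynomial Fq ⧸ Ideal.span {M.1})ˣ)) = Nat.card (CP Fq n) :=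
    fun n => sum_phi n
  have hnorm_fib : ∀ n : ℕ, ∀ M : Mo n, ‖gs ⟨n, M⟩‖ =
      ‖u‖ ^ n * (Nat.card ((Polynomial Fq ⧸ Ideal.span {M.1})ˣ) : ℝ) := by
    intro n M
    rw [hgs]
    simp only [hgdef]
    rw [norm_mul, norm_pow, Complex.norm_natCast]
    congr 2
    exact M.2.2
  have hsum_norm : Summable (fun x : Σ n : ℕ, Mo n => ‖gs x‖) := by
    rw [summable_sigma_of_nonneg (fun x => norm_nonneg _)]
    constructor
    · intro n; exact Summable.of_finite
    · have hbound : ∀ n : ℕ, ∑' M : Mo n, ‖gs ⟨n, M⟩‖ ≤ ‖v‖ ^ n := by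
        intro n
        rw [tsum_fintype]
        have : ∑ M : Mo n, ‖gs ⟨n, M⟩‖ = ‖u‖ ^ n * ((Nat.card (CP Fq n) : ℕ) : ℝ) := by
          rw [Finset.sum_congr rfl (fun M _ => hnorm_fib n M), ← Finset.mul_sum]
          congr 1
          rw [← hfibsum n]
          push_cast
          rfl
        rw [this]
        have h1 : ((Nat.card (CP Fq n) : ℕ) : ℝ) ≤ (Fintype.card Fq : ℝ) ^ (2 * n) := by
          exact_mod_cast cp_le n
        have h2 : ‖v‖ ^ n = rq ^ (2 * n) * ‖u‖ ^ n := by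
          rw [hvdef, norm_mul, mul_pow, norm_pow, hQr, Complex.norm_real,
            Real.norm_of_nonneg hq0.le, ← pow_mul]
        rw [h2]
        calc ‖u‖ ^ n * ((Nat.card (CP Fq n) : ℕ) : ℝ) ≤ ‖u‖ ^ n * rq ^ (2 * n) := by
              apply mul_le_mul_of_nonneg_left _ (pow_nonneg (norm_nonneg _) n)
              exact h1
          _ = rq ^ (2 * n) * ‖u‖ ^ n := by ring
      refine Summable.of_nonneg_of_le (fun n => tsum_nonneg (fun M => norm_nonneg _)) hbound ?_
      exact summable_geometric_of_lt_one (norm_nonneg v) hvlt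
  have hgs_summable : Summable gs := Summable.of_norm hsum_norm
  have hgs_hasSum : HasSum gs (∑' x, gs x) := hgs_summable.hasSum
  -- fiberwise sums
  have hfib : ∀ n : ℕ, HasSum (fun M : Mo n => gs ⟨n, M⟩) (u ^ n * ((Nat.card (CP Fq n) : ℕ) : ℂ)) := by
    intro n
    have h := hasSum_fintype (fun M : Mo n => gs ⟨n, M⟩)
    have heq : ∑ M : Mo n, gs ⟨n, M⟩ = u ^ n * ((Nat.card (CP Fq n) : ℕ) : ℂ) := by
      have : ∀ M : Mo n, gs ⟨n, M⟩ =
          u ^ n * (Nat.card ((Polynomial Fq ⧸ Ideal.span {M.1})ˣ) : ℂ) := by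
        intro M
        rw [hgs]
        simp only [hgdef]
        congr 2
        exact M.2.2
      rw [Finset.sum_congr rfl (fun M _ => this M), ← Finset.mul_sum]
      congr 1
      rw [← hfibsum n]
      push_cast
      rfl
    rwa [heq] at h
  have hrow : HasSum (fun n : ℕ => u ^ n * ((Nat.card (CP Fq n) : ℕ) : ℂ)) (∑' x, gs x) := hgs_hasSum.sigma hfib
  -- geometric evaluation
  set F : ℂ := (1 - Q * u) / (1 - v) with hF
  have hgeom : HasSum (fun n : ℕ => u ^ n * ((Nat.card (CP Fq n) : ℕ) : ℂ)) F := by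
    have hfun : (fun n : ℕ => u ^ n * ((Nat.card (CP Fq n) : ℕ) : ℂ)) =
        fun n => (v ^ n - v ^ n / Q) + (if n = 0 then 1 / Q else 0) := by
      funext n
      cases n with
      | zero =>
        simp only [pow_zero, one_mul, if_pos rfl]
        rw [cp_zero]
        push_cast
        ring
      | succ n =>
        rw [if_neg (Nat.succ_ne_zero n), add_zero]
        have hcval : ((Nat.card (CP Fq (n+1)) : ℕ) : ℂ) = Q ^ (2*n+2) - Q ^ (2*n+1) := by
          have := cp_succ (Fq := Fq) n
          have hcast : ((Nat.card (CP Fq (n+1)) : ℕ) : ℂ) + Q ^ (2*n+1) = Q ^ (2*n+2) := by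
            rw [hQdef]
            exact_mod_cast congrArg (Nat.cast : ℕ → ℂ) this
          linear_combination hcast
        rw [hcval, hvdef]
        field_simp
        ring
    rw [hfun]
    have h1 : HasSum (fun n : ℕ => v ^ n) (1 - v)⁻¹ := hasSum_geometric_of_norm_lt_one hvlt
    have h2 : HasSum (fun n : ℕ => v ^ n / Q) ((1 - v)⁻¹ / Q) := h1.div_const Q
    have h3 : HasSum (fun n : ℕ => if n = 0 then 1 / Q else 0) (1 / Q) := hasSum_ite_eq 0 (1/Q)
    have h4 := (h1.sub h2).add h3
    have hval : (1 - v)⁻¹ - (1 - v)⁻¹ / Q + 1 / Q = F := by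
      rw [hF, hvdef]
      have hv1' : (1:ℂ) - Q ^ 2 * u ≠ 0 := hv1
      field_simp
      ring
    rwa [hval] at h4
  have hSF : (∑' x, gs x) = F := hrow.unique hgeom
  have hg_hasSum : HasSum g F := by
    have := (σE.hasSum_iff (f := gs) (a := F)).mpr (hSF ▸ hgs_hasSum)
    exact this
  -- restricted sum over multiples of A
  have hAdeg : 0 < A.natDegree := hAirr.natDegree_pos
  set a := A.natDegree with ha
  have hι : Function.Injective (fun X : {X : Polynomial Fq // X.Monic ∧ A ∣ X} =>
      (⟨X.1, X.2.1⟩ : Mon)) := by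
    intro x y h
    exact Subtype.ext (by simpa using congrArg Subtype.val h)
  set gR : {X : Polynomial Fq // X.Monic ∧ A ∣ X} → ℂ := fun X => g ⟨X.1, X.2.1⟩ with hgR
  have hgR_summable : Summable gR := hg_hasSum.summable.comp_injective hι
  set R := ∑' X, gR X with hR
  have hmul_bij : Function.Bijective (fun M : Mon =>
      (⟨A * M.1, hA.mul M.2, dvd_mul_right A M.1⟩ : {X : Polynomial Fq // X.Monic ∧ A ∣ X})) := by
    constructor
    · intro x y h
      have h2 := congrArg Subtype.val h
      simp only at h2
      exact Subtype.ext (mul_left_cancel₀ hA.ne_zero h2)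
    · rintro ⟨X, hX, C, rfl⟩
      exact ⟨⟨C, hA.of_mul_monic_left hX⟩, rfl⟩
  set e2 := Equiv.ofBijective _ hmul_bij with he2
  set S : Set Mon := {M | A ∣ M.1} with hSdef
  set φA := Nat.card ((Polynomial Fq ⧸ Ideal.span {A})ˣ) with hφA
  have hφAq : φA + 1 = Fintype.card Fq ^ a := phi_irreducible A hA hAirr
  have hpoint : ∀ M : Mon, gR (e2 M) =
      u ^ a * ((φA : ℂ) * g M + S.indicator g M) := by
    intro M
    have hdeg2 : (A * M.1).natDegree = a + M.1.natDegree := hA.natDegree_mul M.2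
    have hgRe2 : gR (e2 M) = u ^ (A * M.1).natDegree *
        (Nat.card ((Polynomial Fq ⧸ Ideal.span {A * M.1})ˣ) : ℂ) := rfl
    rw [hgRe2, hdeg2, pow_add]
    by_cases hd : A ∣ M.1
    · rw [phi_mul_of_dvd A M.1 hA M.2 hd, Set.indicator_of_mem (by exact hd) g]
      have hcast : ((Fintype.card Fq ^ a : ℕ) : ℂ) = (φA : ℂ) + 1 := by
        exact_mod_cast congrArg (Nat.cast : ℕ → ℂ) hφAq.symm
      simp only [hgdef]
      push_cast [hcast]
      rw [show ((Fintype.card Fq : ℂ)) ^ A.natDegree = (φA : ℂ) + 1 by exact_mod_cast hcast]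
      ring
    · have hcop : IsCoprime A M.1 := hAirr.coprime_iff_not_dvd.mpr hd
      rw [phi_mul_coprime A M.1 hcop, Set.indicator_of_notMem (by exact hd) g]
      simp only [hgdef]
      push_cast
      ring
  have hSum1 : Summable (fun M : Mon => (φA : ℂ) * g M) := hg_hasSum.summable.mul_left _
  have hSum2 : Summable (S.indicator g) := hg_hasSum.summable.indicator S
  have hind : ∑' M : Mon, S.indicator g M = R := by
    calc ∑' M : Mon, S.indicator g M = ∑' x : ↥S, g ↑x := (tsum_subtype S g).symm
      _ = ∑' x : ↥S, gR ⟨x.1.1, x.1.2, x.2⟩ := tsum_congr (fun x => by rw [hgR])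
      _ = R := (tsum_aux A gR).trans hR.symm
  have hfe : R = u ^ a * ((φA : ℂ) * F + R) := by
    have t1 : R = ∑' M : Mon, gR (e2 M) := (e2.tsum_eq gR).symm
    conv_lhs => rw [t1, tsum_congr hpoint]
    rw [tsum_mul_left, hSum1.tsum_add hSum2, tsum_mul_left, hg_hasSum.tsum_eq, hind]
  have hua_lt : ‖u ^ a‖ < 1 := by
    rw [norm_pow]
    exact pow_lt_one₀ (norm_nonneg u) hult (Nat.pos_iff_ne_zero.mp hAdeg)
  have h1ua : (1 : ℂ) - u ^ a ≠ 0 := by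
    intro h
    have h2 : u ^ a = 1 := by linear_combination -h
    rw [h2] at hua_lt
    simp at hua_lt
  have hRval : R = u ^ a * (φA : ℂ) * F / (1 - u ^ a) := by
    rw [eq_div_iff h1ua]
    linear_combination hfe
  have hq2 : 2 ≤ Fintype.card Fq ^ a := by
    calc 2 ≤ Fintype.card Fq := Fintype.one_lt_card
      _ = Fintype.card Fq ^ 1 := (pow_one _).symm
      _ ≤ Fintype.card Fq ^ a := Nat.pow_le_pow_right (le_of_lt Fintype.one_lt_card) hAdeg
  have hφA0 : (φA : ℂ) ≠ 0 := by
    rw [← hφAq] at hq2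
    exact_mod_cast Nat.cast_ne_zero.mpr (Nat.one_le_iff_ne_zero.mp (Nat.le_of_succ_le_succ hq2))
  have htfun : (fun X : {X : Polynomial Fq // X.Monic ∧ A ∣ X} =>
      Q ^ (-(2 * s) * (X.1.natDegree : ℂ)) *
        (Nat.card ((Polynomial Fq ⧸ Ideal.span {A * X.1})ˣ) : ℂ) / (φA : ℂ)) =
      fun X => (((Fintype.card Fq ^ a : ℕ) : ℂ) / (φA : ℂ)) * gR X := by
    funext X
    have h1 : Q ^ (-(2 * s) * (X.1.natDegree : ℂ)) = u ^ X.1.natDegree := by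
      rw [show -(2 * s) * ((X.1.natDegree : ℕ) : ℂ) = ((X.1.natDegree : ℕ) : ℂ) * -(2 * s)
        from mul_comm _ _, Complex.cpow_nat_mul, hudef]
    have h2 := phi_mul_of_dvd A X.1 hA X.2.1 X.2.2
    rw [h1, h2, hgR]
    simp only [hgdef]
    push_cast
    ring
  have hfinal : HasSum (fun X : {X : Polynomial Fq // X.Monic ∧ A ∣ X} =>
      Q ^ (-(2 * s) * (X.1.natDegree : ℂ)) *
        (Nat.card ((Polynomial Fq ⧸ Ideal.span {A * X.1})ˣ) : ℂ) / (φA : ℂ))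
      ((((Fintype.card Fq ^ a : ℕ) : ℂ) / (φA : ℂ)) * R) := by
    rw [htfun]
    exact hgR_summable.hasSum.mul_left _
  -- identify the value
  have hE3 : Q ^ ((1 : ℂ) - 2 * s) = Q * u := by
    rw [show (1 - 2 * s : ℂ) = 1 + -(2 * s) from by ring, Complex.cpow_add _ _ hQ0,
      Complex.cpow_one, hudef]
  have hE4 : Q ^ ((2 : ℂ) - 2 * s) = Q ^ (2 : ℕ) * u := by
    rw [show (2 - 2 * s : ℂ) = ((2 : ℕ) : ℂ) + -(2 * s) from by push_cast; ring,
      Complex.cpow_add _ _ hQ0, Complex.cpow_natCast, hudef]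
  have hE1 : Q ^ ((a : ℂ) * (1 - 2 * s)) = ((Fintype.card Fq ^ a : ℕ) : ℂ) * u ^ a := by
    rw [Complex.cpow_nat_mul, hE3, mul_pow]
    push_cast
    ring
  have hE2 : Q ^ (-(2 * (a : ℂ) * s)) = u ^ a := by
    rw [show -(2 * (a : ℂ) * s) = ((a : ℕ) : ℂ) * -(2 * s) from by push_cast; ring,
      Complex.cpow_nat_mul, hudef]
  have hveq : (Q ^ ((a : ℂ) * (1 - 2 * s)) / (1 - Q ^ (-(2 * (a : ℂ) * s)))) *
      ((1 - Q ^ ((1 : ℂ) - 2 * s)) / (1 - Q ^ ((2 : ℂ) - 2 * s))) =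
      (((Fintype.card Fq ^ a : ℕ) : ℂ) / (φA : ℂ)) * R := by
    rw [hE1, hE2, hE3, hE4, hRval, hF, hvdef]
    field_simp
  have hgoal := hveq ▸ hfinal
  exact hgoal

end PhiAux

theorem phi_dirichlet_series_level {Fq : Type} [Field Fq] [Fintype Fq]
    (A : Polynomial Fq) (hA : A.Monic) (hAirr : Irreducible A)
    (s : ℂ) (hs : 1 < s.re) :
    HasSum (fun X : {X : Polynomial Fq // X.Monic ∧ A ∣ X} =>
        (Fintype.card Fq : ℂ) ^ (-(2 * s) * (X.1.natDegree : ℂ)) *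
          (polyPhi (A * X.1) : ℂ) / (polyPhi A : ℂ))
      (((Fintype.card Fq : ℂ) ^ ((A.natDegree : ℂ) * (1 - 2 * s)) /
          (1 - (Fintype.card Fq : ℂ) ^ (-(2 * (A.natDegree : ℂ) * s)))) *
        ((1 - (Fintype.card Fq : ℂ) ^ (1 - 2 * s)) /
          (1 - (Fintype.card Fq : ℂ) ^ (2 - 2 * s)))) := by
  exact main_thm A hA hAirr s hs
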